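/- arXiv:2402.15763 — 7 statements merged into one kernel-verified Lean document; each statement's English description precedes it below -/
import Mathlib

section
/- Let S be a bounded antilinear involution on H and A, B ∈ B(H) with S*B*S* bounded. Then (A⊗B)F is S-crossable and Cross_S((A⊗B)F) = (S*B*S* ⊗ A)F, where F is the tensor flip. -/
noncomputable section
open scoped InnerProductSpace ComplexConjugate

variable {H K : Type*}

/-- A realization of the Hilbert space tensor square of `H` on a Hilbert space `K`. -/
structure TensorSquare (H K : Type*) [NormedAddCommGroup H] [InnerProductSpace ℂ H]
    [NormedAddCommGroup K] [InnerProductSpace ℂ K] : Type _ where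
  tmul : H → H → K
  tmul_add_left : ∀ a a' b, tmul (a + a') b = tmul a b + tmul a' b
  tmul_add_right : ∀ a b b', tmul a (b + b') = tmul a b + tmul a b'
  tmul_smul_left : ∀ (c : ℂ) a b, tmul (c • a) b = c • tmul a b
  tmul_smul_right : ∀ (c : ℂ) a b, tmul a (c • b) = c • tmul a b
  inner_tmul : ∀ a b c d, ⟪tmul a b, tmul c d⟫_ℂ = ⟪a, c⟫_ℂ * ⟪b, d⟫_ℂ
  dense_span : Dense (↑(Submodule.span ℂ (Set.range fun p : H × H => tmul p.1 p.2)) : Set K)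

/-- A densely defined closed antilinear involution `S` on `H`, together with its adjoint `S*`. -/
structure AntiInvolution (H : Type*) [NormedAddCommGroup H] [InnerProductSpace ℂ H] : Type _ where
  dom : Submodule ℂ H
  toFun : H → H
  dense_dom : Dense (dom : Set H)
  map_add : ∀ x ∈ dom, ∀ y ∈ dom, toFun (x + y) = toFun x + toFun y
  map_smul : ∀ (c : ℂ), ∀ x ∈ dom, toFun (c • x) = (starRingEnd ℂ c) • toFun x
  invol_mem : ∀ x ∈ dom, toFun x ∈ dom
  invol : ∀ x ∈ dom, toFun (toFun x) = x
  closed_graph : IsClosed {p : H × H | p.1 ∈ dom ∧ toFun p.1 = p.2}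
  adjDom : Submodule ℂ H
  adjFun : H → H
  dense_adjDom : Dense (adjDom : Set H)
  adj_spec : ∀ y ∈ adjDom, ∀ x ∈ dom, ⟪adjFun y, x⟫_ℂ = ⟪toFun x, y⟫_ℂ
  adj_max : ∀ y z : H, (∀ x ∈ dom, ⟪z, x⟫_ℂ = ⟪toFun x, y⟫_ℂ) → y ∈ adjDom

section
variable [NormedAddCommGroup H] [InnerProductSpace ℂ H]
  [NormedAddCommGroup K] [InnerProductSpace ℂ K]

/-- The crossing relation (unbounded `S`): `Tc = Cross_S(T)`. -/
def CrossRelU (τ : TensorSquare H K) (S : AntiInvolution H) (T Tc : K →L[ℂ] K) : Prop :=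
  ∀ φ₁ ∈ S.dom, ∀ ψ₁ ∈ S.dom, ∀ φ₂ ∈ S.adjDom, ∀ ψ₂ ∈ S.adjDom,
    ⟪τ.tmul φ₁ φ₂, Tc (τ.tmul ψ₁ ψ₂)⟫_ℂ
      = ⟪τ.tmul φ₂ (S.adjFun ψ₂), T (τ.tmul (S.toFun φ₁) ψ₁)⟫_ℂ

/-- The crossing relation for an everywhere defined (bounded) antilinear involution `S`
with adjoint `Sstar`. -/
def CrossRelB (τ : TensorSquare H K) (S Sstar : H →SL[starRingEnd ℂ] H) (T Tc : K →L[ℂ] K) :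
    Prop :=
  ∀ φ₁ φ₂ ψ₁ ψ₂ : H,
    ⟪τ.tmul φ₁ φ₂, Tc (τ.tmul ψ₁ ψ₂)⟫_ℂ = ⟪τ.tmul φ₂ (Sstar ψ₂), T (τ.tmul (S φ₁) ψ₁)⟫_ℂ

end

theorem inner_antiadjoint_right {E : Type*} [NormedAddCommGroup E] [InnerProductSpace ℂ E]
    {S Sstar : E → E} (hadj : ∀ x y : E, ⟪Sstar y, x⟫_ℂ = ⟪S x, y⟫_ℂ) (x z : E) :
    ⟪x, Sstar z⟫_ℂ = ⟪z, S x⟫_ℂ := by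
  rw [← inner_conj_symm, hadj, inner_conj_symm]

theorem cross_of_prod_times_flip_general
    [NormedAddCommGroup H] [InnerProductSpace ℂ H] [CompleteSpace H]
    [NormedAddCommGroup K] [InnerProductSpace ℂ K]
    (τ : TensorSquare H K)
    (S Sstar : H →SL[starRingEnd ℂ] H)
    (hadj : ∀ x y : H, ⟪Sstar y, x⟫_ℂ = ⟪S x, y⟫_ℂ)
    (A B : H →L[ℂ] H)
    (T : K →L[ℂ] K) (hT : ∀ v w : H, T (τ.tmul v w) = τ.tmul (A w) (B v))
    (Tc : K →L[ℂ] K)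
    (hTc : ∀ v w : H,
      Tc (τ.tmul v w) = τ.tmul (Sstar (ContinuousLinearMap.adjoint B (Sstar w))) (A v)) :
    CrossRelB τ S Sstar T Tc := by
  intro φ₁ φ₂ ψ₁ ψ₂
  rw [hTc, hT, τ.inner_tmul, τ.inner_tmul, inner_antiadjoint_right hadj,
    ContinuousLinearMap.adjoint_inner_left, mul_comm]

/-- Let `S` be a bounded antilinear involution on `H` with adjoint `S*`,
and `A, B ∈ B(H)`. Then `(A ⊗ B)F` is `S`-crossable and
`Cross_S((A ⊗ B)F) = (S* B* S* ⊗ A) F`, where `F` is the tensor flip.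
Here `T` realizes `(A ⊗ B)F` and `Tc` realizes `(S* B* S* ⊗ A)F` on the tensor square. -/
theorem cross_of_prod_times_flip
    [NormedAddCommGroup H] [InnerProductSpace ℂ H] [CompleteSpace H]
    [NormedAddCommGroup K] [InnerProductSpace ℂ K] [CompleteSpace K]
    (τ : TensorSquare H K)
    (S Sstar : H →SL[starRingEnd ℂ] H)
    (hinv : ∀ x : H, S (S x) = x)
    (hadj : ∀ x y : H, ⟪Sstar y, x⟫_ℂ = ⟪S x, y⟫_ℂ)
    (A B : H →L[ℂ] H)
    (T : K →L[ℂ] K) (hT : ∀ v w : H, T (τ.tmul v w) = τ.tmul (A w) (B v))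
    (Tc : K →L[ℂ] K)
    (hTc : ∀ v w : H,
      Tc (τ.tmul v w) = τ.tmul (Sstar (ContinuousLinearMap.adjoint B (Sstar w))) (A v)) :
    CrossRelB τ S Sstar T Tc :=
  cross_of_prod_times_flip_general τ S Sstar hadj A B T hT Tc hTc
end
end

section
/- Let H = L²(ℝ), (Sf)(x) = conj(f(x)), and w ∈ L^∞(ℝ²). Define the weighted flip (F_w ψ)(x,y) = w(x,y)ψ(y,x) on L²(ℝ²) ≅ H⊗H. Then F_w is S-crossable with Cross_S(F_w) = F_{ŵ} where ŵ(x,y) = w(y,x), and F_w is S-crossing symmetric if and only if w is real-valued (a.e.). -/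
noncomputable section
open scoped InnerProductSpace ComplexConjugate

variable {H K : Type*}

open MeasureTheory

/-!
Everything reduces to `⟪ψ, F_w χ⟫ = ∫ w(p) conj(ψ(p)) χ(p.swap)`. On elementary tensors the two
sides of the crossing relation are then one integral read in the coordinates `(x, y)` and `(y, x)`,
with `S` contributing exactly the conjugations. For the adjoint, the same change of variables shows
that `F_w† = F_v` says `∫ (conj (v ∘ swap) - w) conj(ψ) (χ ∘ swap) = 0` for all `ψ, χ`; testing with
`ψ = 1_s`, `χ = 1_{swap⁻¹ s}` makes the set integrals of `conj (v ∘ swap)` and `w` agree on every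
set of finite measure, so the weights agree a.e.
-/

section

variable {α : Type*} [MeasurableSpace α] {μ : Measure α}

theorem L2.inner_eq_integral_conj_mul (f g : Lp ℂ 2 μ) :
    ⟪f, g⟫_ℂ = ∫ x, conj (f x) * g x ∂μ := by
  simp only [L2.inner_def, RCLike.inner_apply']

def IsWeightedFlip (μ : Measure α) (w : α × α → ℂ)
    (F : Lp ℂ 2 (μ.prod μ) →L[ℂ] Lp ℂ 2 (μ.prod μ)) : Prop :=
  ∀ ψ, (F ψ : α × α → ℂ) =ᵐ[μ.prod μ] fun p => w p * ψ p.swap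

variable {w : α × α → ℂ} {F : Lp ℂ 2 (μ.prod μ) →L[ℂ] Lp ℂ 2 (μ.prod μ)}

theorem IsWeightedFlip.inner_right (hF : IsWeightedFlip μ w F) (ψ χ : Lp ℂ 2 (μ.prod μ)) :
    ⟪ψ, F χ⟫_ℂ = ∫ p, w p * (conj (ψ p) * χ p.swap) ∂μ.prod μ := by
  rw [L2.inner_eq_integral_conj_mul]
  refine integral_congr_ae ?_
  filter_upwards [hF χ] with p hp
  rw [hp]
  ring

theorem IsWeightedFlip.inner_left [SFinite μ] (hF : IsWeightedFlip μ w F)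
    (ψ χ : Lp ℂ 2 (μ.prod μ)) :
    ⟪F ψ, χ⟫_ℂ = ∫ p, conj (w p.swap) * (conj (ψ p) * χ p.swap) ∂μ.prod μ := by
  rw [L2.inner_eq_integral_conj_mul, ← integral_prod_swap]
  refine integral_congr_ae ?_
  filter_upwards [Measure.measurePreserving_swap.quasiMeasurePreserving.ae_eq_comp (hF ψ)]
    with p hp
  simp only [Function.comp_apply, Prod.swap_swap] at hp ⊢
  rw [hp, map_mul]
  ring

end

section

variable {α : Type*} [MeasurableSpace α] {μ : Measure α} [SFinite μ] {w : α × α → ℂ}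
  {F F' : Lp ℂ 2 (μ.prod μ) →L[ℂ] Lp ℂ 2 (μ.prod μ)}
  {τ : TensorSquare (Lp ℂ 2 μ) (Lp ℂ 2 (μ.prod μ))}

theorem IsWeightedFlip.inner_tmul_tmul
    (hτ : ∀ f g : Lp ℂ 2 μ, (τ.tmul f g : α × α → ℂ) =ᵐ[μ.prod μ] fun p => f p.1 * g p.2)
    (hF : IsWeightedFlip μ w F) (a b c d : Lp ℂ 2 μ) :
    ⟪τ.tmul a b, F (τ.tmul c d)⟫_ℂ
      = ∫ p, w p * (conj (a p.1 * b p.2) * (c p.2 * d p.1)) ∂μ.prod μ := by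
  rw [hF.inner_right]
  refine integral_congr_ae ?_
  filter_upwards [hτ a b,
    Measure.measurePreserving_swap.quasiMeasurePreserving.ae_eq_comp (hτ c d)] with p hab hcd
  simp only [Function.comp_apply] at hcd
  rw [hab, hcd, Prod.fst_swap, Prod.snd_swap]

theorem IsWeightedFlip.crossRelB
    (hτ : ∀ f g : Lp ℂ 2 μ, (τ.tmul f g : α × α → ℂ) =ᵐ[μ.prod μ] fun p => f p.1 * g p.2)
    (S : Lp ℂ 2 μ →SL[starRingEnd ℂ] Lp ℂ 2 μ)
    (hS : ∀ f : Lp ℂ 2 μ, (S f : α → ℂ) =ᵐ[μ] fun x => conj (f x))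
    (hF : IsWeightedFlip μ w F) (hF' : IsWeightedFlip μ (fun p => w p.swap) F') :
    CrossRelB τ S S F F' := by
  intro φ₁ φ₂ ψ₁ ψ₂
  have hS_snd (f : Lp ℂ 2 μ) : (fun p : α × α => (S f : α → ℂ) p.2) =ᵐ[μ.prod μ]
      fun p => conj (f p.2) :=
    Measure.quasiMeasurePreserving_snd.ae_eq_comp (hS f)
  calc ⟪τ.tmul φ₁ φ₂, F' (τ.tmul ψ₁ ψ₂)⟫_ℂ
      = ∫ p, w p.swap * (conj (φ₁ p.1 * φ₂ p.2) * (ψ₁ p.2 * ψ₂ p.1)) ∂μ.prod μ :=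
        hF'.inner_tmul_tmul hτ ..
    _ = ∫ p, w p * (conj (φ₂ p.1 * conj (ψ₂ p.2)) * (conj (φ₁ p.2) * ψ₁ p.1)) ∂μ.prod μ := by
        rw [← integral_prod_swap]
        refine integral_congr_ae (Filter.Eventually.of_forall fun p => ?_)
        simp only [Prod.swap_swap, Prod.fst_swap, Prod.snd_swap, map_mul, Complex.conj_conj]
        ring
    _ = ⟪τ.tmul φ₂ (S ψ₂), F (τ.tmul (S φ₁) ψ₁)⟫_ℂ := by
        rw [hF.inner_tmul_tmul hτ]
        refine integral_congr_ae ?_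
        filter_upwards [hS_snd ψ₂, hS_snd φ₁] with p hψ₂ hφ₁
        rw [hψ₂, hφ₁]

end

section

variable {α : Type*} [MeasurableSpace α] {μ : Measure α} [SigmaFinite μ]

theorem ae_eq_of_forall_weighted_swap_integral_eq {u v : α × α → ℂ}
    (hu : ∀ s, MeasurableSet s → μ.prod μ s < ⊤ → IntegrableOn u s (μ.prod μ))
    (hv : ∀ s, MeasurableSet s → μ.prod μ s < ⊤ → IntegrableOn v s (μ.prod μ))
    (h : ∀ ψ χ : Lp ℂ 2 (μ.prod μ), ∫ p, u p * (conj (ψ p) * χ p.swap) ∂μ.prod μ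
      = ∫ p, v p * (conj (ψ p) * χ p.swap) ∂μ.prod μ) :
    u =ᵐ[μ.prod μ] v := by
  refine ae_eq_of_forall_setIntegral_eq_of_sigmaFinite hu hv fun s hs hsfin => ?_
  have hs' : MeasurableSet (Prod.swap ⁻¹' s) := hs.preimage measurable_swap
  have hs'fin : μ.prod μ (Prod.swap ⁻¹' s) < ⊤ := by
    rwa [Measure.measurePreserving_swap.measure_preimage hs.nullMeasurableSet]
  have hpair (f : α × α → ℂ) : ∫ p, f p * (conj (indicatorConstLp 2 hs hsfin.ne (1 : ℂ) p)
      * indicatorConstLp 2 hs' hs'fin.ne (1 : ℂ) p.swap) ∂μ.prod μ = ∫ p in s, f p ∂μ.prod μ := by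
    rw [← integral_indicator hs]
    refine integral_congr_ae ?_
    filter_upwards [indicatorConstLp_coeFn (p := 2) (hs := hs) (hμs := hsfin.ne) (c := (1 : ℂ)),
      Measure.measurePreserving_swap.quasiMeasurePreserving.ae_eq_comp
        (indicatorConstLp_coeFn (p := 2) (hs := hs') (hμs := hs'fin.ne) (c := (1 : ℂ)))]
      with p h₁ h₂
    simp only [Function.comp_apply] at h₂
    rw [h₁, h₂]
    by_cases hp : p ∈ s <;> simp [hp]
  rw [← hpair, ← hpair, h]

variable {w v : α × α → ℂ} {F G : Lp ℂ 2 (μ.prod μ) →L[ℂ] Lp ℂ 2 (μ.prod μ)}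

theorem IsWeightedFlip.adjoint_eq_iff (hF : IsWeightedFlip μ w F) (hG : IsWeightedFlip μ v G)
    (hw : ∀ s, MeasurableSet s → μ.prod μ s < ⊤ → IntegrableOn w s (μ.prod μ))
    (hv : ∀ s, MeasurableSet s → μ.prod μ s < ⊤ →
      IntegrableOn (fun p => conj (v p.swap)) s (μ.prod μ)) :
    ContinuousLinearMap.adjoint F = G ↔ (fun p => conj (v p.swap)) =ᵐ[μ.prod μ] w := by
  rw [eq_comm, ContinuousLinearMap.eq_adjoint_iff]
  simp only [hF.inner_right, hG.inner_left]
  refine ⟨ae_eq_of_forall_weighted_swap_integral_eq hv hw, fun h ψ χ => ?_⟩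
  refine integral_congr_ae ?_
  filter_upwards [h] with p hp
  rw [hp]

end

/-- Let `H = L²(ℝ)` with `S` pointwise complex conjugation (an antiunitary
involution, `S* = S`), and `w ∈ L^∞(ℝ²)`. The weighted flip `(F_w ψ)(x,y) = w(x,y) ψ(y,x)`
on `L²(ℝ²) ≅ H ⊗ H` is `S`-crossable with `Cross_S(F_w) = F_{ŵ}`, `ŵ(x,y) = w(y,x)`, and
`F_w` is `S`-crossing symmetric iff `w` is real-valued a.e. -/
theorem weighted_flip_crossing
    (w : ℝ × ℝ → ℂ) (hw : Measurable w) (hwbdd : ∃ C : ℝ, ∀ p, ‖w p‖ ≤ C)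
    (τ : TensorSquare (Lp ℂ 2 (volume : Measure ℝ)) (Lp ℂ 2 (volume : Measure (ℝ × ℝ))))
    (hτ : ∀ f g : Lp ℂ 2 (volume : Measure ℝ),
      (τ.tmul f g : ℝ × ℝ → ℂ) =ᵐ[volume] fun p => f p.1 * g p.2)
    (S : Lp ℂ 2 (volume : Measure ℝ) →SL[starRingEnd ℂ] Lp ℂ 2 (volume : Measure ℝ))
    (hS : ∀ f : Lp ℂ 2 (volume : Measure ℝ), (S f : ℝ → ℂ) =ᵐ[volume] fun x => conj (f x))
    (Fw Fw' : Lp ℂ 2 (volume : Measure (ℝ × ℝ)) →L[ℂ] Lp ℂ 2 (volume : Measure (ℝ × ℝ)))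
    (hFw : ∀ ψ : Lp ℂ 2 (volume : Measure (ℝ × ℝ)),
      (Fw ψ : ℝ × ℝ → ℂ) =ᵐ[volume] fun p => w p * ψ (p.2, p.1))
    (hFw' : ∀ ψ : Lp ℂ 2 (volume : Measure (ℝ × ℝ)),
      (Fw' ψ : ℝ × ℝ → ℂ) =ᵐ[volume] fun p => w (p.2, p.1) * ψ (p.2, p.1)) :
    CrossRelB τ S S Fw Fw' ∧
    (ContinuousLinearMap.adjoint Fw = Fw' ↔ ∀ᵐ p ∂(volume : Measure (ℝ × ℝ)), (w p).im = 0) := by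
  have hF : IsWeightedFlip volume w Fw := hFw
  have hF' : IsWeightedFlip volume (fun p => w p.swap) Fw' := hFw'
  obtain ⟨C, hC⟩ := hwbdd
  have hw_int (f : ℝ × ℝ → ℂ) (hf : Measurable f) (hfC : ∀ p, ‖f p‖ ≤ C) (s : Set (ℝ × ℝ))
      (_ : MeasurableSet s) (hs : volume s < ⊤) : IntegrableOn f s volume :=
    Measure.integrableOn_of_bounded hs.ne hf.aestronglyMeasurable (.of_forall hfC)
  refine ⟨hF.crossRelB hτ S hS hF', ?_⟩
  rw [hF.adjoint_eq_iff hF' (hw_int w hw hC)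
    (hw_int _ (Complex.continuous_conj.measurable.comp hw) (by simpa using hC))]
  simp only [Prod.swap_swap, Filter.EventuallyEq, Complex.conj_eq_iff_im, Measure.volume_eq_prod]
end
end

section
/- Let H be a finite-dimensional complex Hilbert space with an antilinear involution S, let {e_n} be an orthonormal basis, ξ_S = Σ_n e_n ⊗ S e_n, and P_S = |ξ_S⟩⟨ξ_S| (so P_S(v⊗w) = ⟨Sv,w⟩ ξ_S). Then Cross_S(1) = P_S and Cross_S(P_S) = 1. In particular ξ_S is independent of the chosen orthonormal basis. -/
noncomputable section
open scoped InnerProductSpace ComplexConjugate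

variable {H K : Type*}

/-!
Expanding `S φ₁` in the basis `b` (the coefficients get conjugated, which swaps the inner
products) gives `⟪φ₁ ⊗ φ₂, ξ_S⟫ = ⟪φ₂, S φ₁⟫` for every orthonormal basis. With this, both
crossing identities reduce to products of two inner products matched by
`⟪S* y, x⟫ = ⟪S x, y⟫` and `S² = 1`; and since elementary tensors span a dense subspace of `K`,
these inner products determine `ξ_S`, whence its independence of the basis.
-/

namespace TensorSquare

variable [NormedAddCommGroup H] [InnerProductSpace ℂ H] [NormedAddCommGroup K]
  [InnerProductSpace ℂ K] (τ : TensorSquare H K)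

theorem ext_inner_tmul {x y : K} (h : ∀ a b, ⟪τ.tmul a b, x⟫_ℂ = ⟪τ.tmul a b, y⟫_ℂ) :
    x = y := by
  refine τ.dense_span.eq_of_inner_right ℂ fun v hv => ?_
  rw [← sub_eq_zero, ← inner_sub_right, ← Submodule.mem_orthogonal_singleton_iff_inner_left]
  refine Submodule.span_le.2 ?_ hv
  rintro _ ⟨⟨a, b⟩, rfl⟩
  rw [SetLike.mem_coe, Submodule.mem_orthogonal_singleton_iff_inner_left, inner_sub_right, h,
    sub_self]

theorem inner_tmul_sum_tmul_map {ι : Type*} [Fintype ι] (S : H →SL[starRingEnd ℂ] H)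
    (b : OrthonormalBasis ι ℂ H) (φ₁ φ₂ : H) :
    ⟪τ.tmul φ₁ φ₂, ∑ n, τ.tmul (b n) (S (b n))⟫_ℂ = ⟪φ₂, S φ₁⟫_ℂ := by
  have hS : S φ₁ = ∑ n, ⟪φ₁, b n⟫_ℂ • S (b n) := by
    conv_lhs => rw [← b.sum_repr' φ₁, map_sum]
    simp only [map_smulₛₗ, inner_conj_symm]
  simp only [hS, inner_sum, τ.inner_tmul, inner_smul_right]

end TensorSquare

theorem cross_of_identity_eq_PS_general
    [NormedAddCommGroup H] [InnerProductSpace ℂ H]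
    [NormedAddCommGroup K] [InnerProductSpace ℂ K]
    (τ : TensorSquare H K)
    (S Sstar : H →SL[starRingEnd ℂ] H)
    (hinv : ∀ x : H, S (S x) = x)
    (hadj : ∀ x y : H, ⟪Sstar y, x⟫_ℂ = ⟪S x, y⟫_ℂ)
    {ι : Type*} [Fintype ι] (b : OrthonormalBasis ι ℂ H)
    (P : K →L[ℂ] K)
    (hP : ∀ v w : H, P (τ.tmul v w) = ⟪S v, w⟫_ℂ • ∑ n, τ.tmul (b n) (S (b n))) :
    CrossRelB τ S Sstar (1 : K →L[ℂ] K) P ∧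
    CrossRelB τ S Sstar P (1 : K →L[ℂ] K) ∧
    (∀ {ι' : Type} [Fintype ι'] (b' : OrthonormalBasis ι' ℂ H),
      ∑ n, τ.tmul (b' n) (S (b' n)) = ∑ n, τ.tmul (b n) (S (b n))) := by
  refine ⟨fun φ₁ φ₂ ψ₁ ψ₂ => ?_, fun φ₁ φ₂ ψ₁ ψ₂ => ?_, fun b' => ?_⟩
  · rw [hP, inner_smul_right, τ.inner_tmul_sum_tmul_map, one_apply_eq_self,
      τ.inner_tmul, hadj, mul_comm]
  · rw [one_apply_eq_self, hP, inner_smul_right,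
      τ.inner_tmul_sum_tmul_map, hinv, τ.inner_tmul, hadj, hinv]
  · exact τ.ext_inner_tmul fun φ₁ φ₂ => by
      rw [τ.inner_tmul_sum_tmul_map, τ.inner_tmul_sum_tmul_map]

/-- On a finite-dimensional Hilbert space `H` with antilinear involution
`S`, let `ξ_S = Σ_n e_n ⊗ S e_n` for an orthonormal basis `{e_n}` and let `P_S` act by
`P_S (v ⊗ w) = ⟨S v, w⟩ ξ_S`. Then `Cross_S(1) = P_S` and `Cross_S(P_S) = 1`; in particular
`ξ_S` is independent of the chosen orthonormal basis. -/
theorem cross_of_identity_eq_PS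
    [NormedAddCommGroup H] [InnerProductSpace ℂ H] [FiniteDimensional ℂ H]
    [NormedAddCommGroup K] [InnerProductSpace ℂ K] [CompleteSpace K]
    (τ : TensorSquare H K)
    (S Sstar : H →SL[starRingEnd ℂ] H)
    (hinv : ∀ x : H, S (S x) = x)
    (hadj : ∀ x y : H, ⟪Sstar y, x⟫_ℂ = ⟪S x, y⟫_ℂ)
    {ι : Type*} [Fintype ι] (b : OrthonormalBasis ι ℂ H)
    (P : K →L[ℂ] K)
    (hP : ∀ v w : H, P (τ.tmul v w) = ⟪S v, w⟫_ℂ • ∑ n, τ.tmul (b n) (S (b n))) :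
    CrossRelB τ S Sstar (1 : K →L[ℂ] K) P ∧
    CrossRelB τ S Sstar P (1 : K →L[ℂ] K) ∧
    (∀ {ι' : Type} [Fintype ι'] (b' : OrthonormalBasis ι' ℂ H),
      ∑ n, τ.tmul (b' n) (S (b' n)) = ∑ n, τ.tmul (b n) (S (b n))) :=
  cross_of_identity_eq_PS_general τ S Sstar hinv hadj b P hP
end
end

section
/- If dim H = ∞, then the identity operator on H⊗H is not S-crossable for any densely defined closed antilinear involution S; that is, there exists no bounded operator Cross_S(1) satisfying the crossing relation. -/
/-!
Taking `T = 1`, the crossing relation factorizes as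
`⟪φ₁ ⊗ φ₂, Tc (ψ₁ ⊗ ψ₂)⟫ = ⟪φ₂, S φ₁⟫ * ⟪S ψ₁, ψ₂⟫`, so a suitable multiple `v` of a vector
`Tc (ψ₁ ⊗ ψ₂)` represents the pairing `a ⊗ b ↦ ⟪b, S a⟫`. Testing against `S a ⊗ a` gives
`‖a‖ ≤ ‖v‖ * ‖S a‖`. For an orthonormal sequence `eₖ` in the domain of `S`, the vectors
`eₖ ⊗ S eₖ / ‖S eₖ‖` are orthonormal and their inner products with `v` are `‖S eₖ‖ ≥ 1 / ‖v‖`,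
contradicting Bessel's inequality.
-/

noncomputable section
open scoped InnerProductSpace ComplexConjugate

variable {H K : Type*}

open Filter Topology

lemma exists_orthonormal_nat_of_dense {𝕜 E : Type*} [RCLike 𝕜] [NormedAddCommGroup E]
    [InnerProductSpace 𝕜 E] (hinf : ¬ FiniteDimensional 𝕜 E) {D : Submodule 𝕜 E}
    (hD : Dense (D : Set E)) : ∃ e : ℕ → E, Orthonormal 𝕜 e ∧ ∀ n, e n ∈ D := by
  have hDinf : ¬ FiniteDimensional 𝕜 D := fun _ ↦ by
    have hDtop : D = ⊤ := by
      rw [← Submodule.dense_iff_topologicalClosure_eq_top.mp hD,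
        D.closed_of_finiteDimensional.submodule_topologicalClosure_eq]
    have : FiniteDimensional 𝕜 (⊤ : Submodule 𝕜 E) := hDtop ▸ ‹_›
    exact hinf Submodule.topEquiv.finiteDimensional
  let b := Module.Basis.ofVectorSpace 𝕜 D
  have : Infinite (Module.Basis.ofVectorSpaceIndex 𝕜 D) :=
    not_finite_iff_infinite.mp fun _ ↦ hDinf (Module.Finite.of_basis b)
  have hli : LinearIndependent 𝕜 (b ∘ Infinite.natEmbedding _) :=
    b.linearIndependent.comp _ (Infinite.natEmbedding _).injective
  exact ⟨D.subtypeₗᵢ ∘ InnerProductSpace.gramSchmidtNormed 𝕜 (b ∘ Infinite.natEmbedding _),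
    (InnerProductSpace.gramSchmidtNormed_orthonormal hli).comp_linearIsometry _,
    fun n ↦ Submodule.coe_mem _⟩

section

variable [NormedAddCommGroup H] [InnerProductSpace ℂ H]
  [NormedAddCommGroup K] [InnerProductSpace ℂ K]

namespace AntiInvolution

variable (S : AntiInvolution H)

lemma toFun_zero : S.toFun 0 = 0 := by
  simpa using S.map_smul 0 0 S.dom.zero_mem

lemma toFun_ne_zero {x : H} (hx : x ∈ S.dom) (hx0 : x ≠ 0) : S.toFun x ≠ 0 := fun h ↦
  hx0 (by rw [← S.invol x hx, h, S.toFun_zero])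

end AntiInvolution

namespace TensorSquare

variable (τ : TensorSquare H K)

lemma norm_tmul (a b : H) : ‖τ.tmul a b‖ = ‖a‖ * ‖b‖ := by
  have h := τ.inner_tmul a b a b
  simp only [inner_self_eq_norm_sq_to_K] at h
  rw [← mul_pow] at h
  exact (pow_left_inj₀ (norm_nonneg _) (by positivity) two_ne_zero).mp (by exact_mod_cast h)

lemma continuous_tmul_right (a : H) : Continuous (τ.tmul a) :=
  AddMonoidHomClass.continuous_of_bound (AddMonoidHom.mk' (τ.tmul a) (τ.tmul_add_right a)) ‖a‖
    fun b ↦ (τ.norm_tmul a b).le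

lemma orthonormal_tmul {ι : Type*} {e f : ι → H} (he : Orthonormal ℂ e)
    (hf : ∀ i, ‖f i‖ = 1) : Orthonormal ℂ fun i ↦ τ.tmul (e i) (f i) := by
  refine ⟨fun i ↦ by rw [τ.norm_tmul, he.1 i, hf i, one_mul], fun i j hij ↦ ?_⟩
  simp only [τ.inner_tmul, he.2 hij, zero_mul]

end TensorSquare

def RepresentsPairing (τ : TensorSquare H K) (S : AntiInvolution H) (v : K) : Prop :=
  ∀ a ∈ S.dom, ∀ b, ⟪τ.tmul a b, v⟫_ℂ = ⟪b, S.toFun a⟫_ℂ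

lemma CrossRelU.exists_representsPairing {τ : TensorSquare H K} {S : AntiInvolution H}
    {Tc : K →L[ℂ] K} (hTc : CrossRelU τ S 1 Tc) {ψ₁ : H} (hψ₁ : ψ₁ ∈ S.dom) (hψ₁0 : ψ₁ ≠ 0) :
    ∃ v, RepresentsPairing τ S v := by
  obtain ⟨ψ₂, hψ₂, hc⟩ : ∃ ψ₂ ∈ S.adjDom, ⟪S.toFun ψ₁, ψ₂⟫_ℂ ≠ 0 := by
    by_contra! h
    exact S.toFun_ne_zero hψ₁ hψ₁0 (S.dense_adjDom.eq_zero_of_inner_left ℂ h)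
  refine ⟨(⟪S.toFun ψ₁, ψ₂⟫_ℂ)⁻¹ • Tc (τ.tmul ψ₁ ψ₂), fun a ha ↦ funext_iff.mp ?_⟩
  refine ((τ.continuous_tmul_right a).inner continuous_const).ext_on S.dense_adjDom
    (continuous_id.inner continuous_const) fun b hb ↦ ?_
  simp only [inner_smul_right, hTc a ha ψ₁ hψ₁ b hb ψ₂ hψ₂, one_apply_eq_self,
    τ.inner_tmul, S.adj_spec ψ₂ hψ₂ ψ₁ hψ₁]
  field_simp

namespace RepresentsPairing

variable {τ : TensorSquare H K} {S : AntiInvolution H} {v : K}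

lemma norm_le_mul_norm_toFun (hv : RepresentsPairing τ S v) {a : H} (ha : a ∈ S.dom) :
    ‖a‖ ≤ ‖v‖ * ‖S.toFun a‖ := by
  have h : ‖a‖ ^ 2 ≤ ‖S.toFun a‖ * ‖a‖ * ‖v‖ := by
    calc ‖a‖ ^ 2 = ‖⟪τ.tmul (S.toFun a) a, v⟫_ℂ‖ := by
          rw [hv _ (S.invol_mem a ha), S.invol a ha, inner_self_eq_norm_sq_to_K]; simp
      _ ≤ ‖S.toFun a‖ * ‖a‖ * ‖v‖ := by
          rw [← τ.norm_tmul]; exact norm_inner_le_norm _ _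
  rcases (norm_nonneg a).eq_or_lt with ha0 | ha0
  · rw [← ha0]; positivity
  · nlinarith

lemma finiteDimensional (hv : RepresentsPairing τ S v) : FiniteDimensional ℂ H := by
  by_contra hinf
  obtain ⟨e, he, heD⟩ := exists_orthonormal_nat_of_dense hinf S.dense_dom
  have hlow : ∀ k, 1 ≤ ‖v‖ * ‖S.toFun (e k)‖ := fun k ↦ by
    simpa [he.1 k] using hv.norm_le_mul_norm_toFun (heD k)
  have hSe : ∀ k, S.toFun (e k) ≠ 0 := fun k h ↦ by simpa [h] using (hlow k).trans_lt' one_pos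
  let f k : H := (‖S.toFun (e k)‖⁻¹ : ℂ) • S.toFun (e k)
  have hw : Orthonormal ℂ fun k ↦ τ.tmul (e k) (f k) :=
    τ.orthonormal_tmul he fun k ↦ norm_smul_inv_norm (hSe k)
  have hcoef : ∀ k, ‖⟪τ.tmul (e k) (f k), v⟫_ℂ‖ = ‖S.toFun (e k)‖ := fun k ↦ by
    rw [hv _ (heD k), inner_smul_left, inner_self_eq_norm_sq_to_K]
    simp only [map_inv₀, Complex.conj_ofReal, norm_mul, norm_inv, norm_pow, RCLike.norm_coe_norm,
      Complex.norm_real, norm_norm]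
    field_simp
  have hzero : Tendsto (fun k ↦ ‖v‖ ^ 2 * ‖⟪τ.tmul (e k) (f k), v⟫_ℂ‖ ^ 2) atTop (𝓝 0) := by
    simpa using (hw.inner_products_summable v).tendsto_atTop_zero.const_mul (‖v‖ ^ 2)
  refine absurd (ge_of_tendsto' hzero fun k ↦ ?_) zero_lt_one.not_ge
  rw [hcoef, ← mul_pow]
  exact one_le_pow₀ (hlow k)

end RepresentsPairing

end

theorem identity_not_crossable_of_infinite_dimensional_general
    [NormedAddCommGroup H] [InnerProductSpace ℂ H]
    [NormedAddCommGroup K] [InnerProductSpace ℂ K]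
    (hinf : ¬ FiniteDimensional ℂ H)
    (τ : TensorSquare H K) (S : AntiInvolution H) :
    ¬ ∃ Tc : K →L[ℂ] K, CrossRelU τ S (1 : K →L[ℂ] K) Tc := by
  rintro ⟨Tc, hTc⟩
  obtain ⟨e, he, heD⟩ := exists_orthonormal_nat_of_dense hinf S.dense_dom
  obtain ⟨v, hv⟩ := hTc.exists_representsPairing (heD 0) (he.ne_zero 0)
  exact hinf hv.finiteDimensional

/-- If `dim H = ∞`, the identity operator on `H ⊗ H` is not `S`-crossable
for any densely defined closed antilinear involution `S`: no bounded operator satisfies the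
crossing relation with `T = 1`. -/
theorem identity_not_crossable_of_infinite_dimensional
    [NormedAddCommGroup H] [InnerProductSpace ℂ H] [CompleteSpace H]
    [SecondCountableTopology H]
    [NormedAddCommGroup K] [InnerProductSpace ℂ K] [CompleteSpace K]
    (hinf : ¬ FiniteDimensional ℂ H)
    (τ : TensorSquare H K) (S : AntiInvolution H) :
    ¬ ∃ Tc : K →L[ℂ] K, CrossRelU τ S (1 : K →L[ℂ] K) Tc :=
  identity_not_crossable_of_infinite_dimensional_general hinf τ S
end
end

section
/- If S₁ and S₂ are two bounded antilinear involutions on H, then an operator T ∈ B(H⊗H) is S₁-crossable if and only if it is S₂-crossable, and in that case Cross_{S₁}(T) = (S₁*S₂* ⊗ 1) Cross_{S₂}(T) (1 ⊗ S₂*S₁*). -/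
noncomputable section
open scoped InnerProductSpace ComplexConjugate

variable {H K : Type*}

/-! `L = S₁*S₂* ⊗ 1` is the adjoint of `S₂S₁ ⊗ 1`, so in `⟪φ₁ ⊗ φ₂, L Tc₂ R (ψ₁ ⊗ ψ₂)⟫` it moves
onto the left vector; the `S₂`-crossing relation then produces `S₂S₂S₁φ₁ = S₁φ₁` and
`S₂*S₂*S₁*ψ₂ = S₁*ψ₂`, which is the `S₁`-crossing relation. Exchanging `S₁` and `S₂` gives the
converse implication. -/

namespace TensorSquare

variable [NormedAddCommGroup H] [InnerProductSpace ℂ H]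
  [NormedAddCommGroup K] [InnerProductSpace ℂ K]

theorem ext_tmul {F : Type*} [TopologicalSpace F] [AddCommMonoid F] [Module ℂ F] [T2Space F]
    (τ : TensorSquare H K) {f g : K →L[ℂ] F}
    (h : ∀ v w : H, f (τ.tmul v w) = g (τ.tmul v w)) : f = g :=
  ContinuousLinearMap.ext_on τ.dense_span (by rintro _ ⟨⟨v, w⟩, rfl⟩; exact h v w)

theorem inner_tmul_apply_of_map_left (τ : TensorSquare H K) (L : K →L[ℂ] K) {A B : H → H}
    (hL : ∀ v w : H, L (τ.tmul v w) = τ.tmul (A v) w) (hAB : ∀ x y : H, ⟪x, A y⟫_ℂ = ⟪B x, y⟫_ℂ)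
    (φ₁ φ₂ : H) (z : K) : ⟪τ.tmul φ₁ φ₂, L z⟫_ℂ = ⟪τ.tmul (B φ₁) φ₂, z⟫_ℂ := by
  suffices (innerSL ℂ (τ.tmul φ₁ φ₂)).comp L = innerSL ℂ (τ.tmul (B φ₁) φ₂) from
    congrArg (· z) this
  refine τ.ext_tmul fun v w => ?_
  simp only [ContinuousLinearMap.comp_apply, innerSL_apply_apply, hL, τ.inner_tmul, hAB]

end TensorSquare

section AntilinearAdjoint

variable [NormedAddCommGroup H] [InnerProductSpace ℂ H]

theorem Function.Involutive.antilinearAdjoint {S Ss : H → H} (hinv : Function.Involutive S)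
    (hadj : ∀ x y : H, ⟪Ss y, x⟫_ℂ = ⟪S x, y⟫_ℂ) : Function.Involutive Ss := fun y =>
  ext_inner_right ℂ fun x => by rw [hadj, ← inner_conj_symm, hadj, hinv, inner_conj_symm]

theorem inner_antilinearAdjoint_comp {S₁ S₁s S₂ S₂s : H → H}
    (hadj₁ : ∀ x y : H, ⟪S₁s y, x⟫_ℂ = ⟪S₁ x, y⟫_ℂ)
    (hadj₂ : ∀ x y : H, ⟪S₂s y, x⟫_ℂ = ⟪S₂ x, y⟫_ℂ) (x y : H) :
    ⟪x, S₁s (S₂s y)⟫_ℂ = ⟪S₂ (S₁ x), y⟫_ℂ := by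
  rw [← inner_conj_symm, hadj₁, inner_conj_symm, hadj₂]

end AntilinearAdjoint

section Crossing

variable [NormedAddCommGroup H] [InnerProductSpace ℂ H]
  [NormedAddCommGroup K] [InnerProductSpace ℂ K]

theorem CrossRelB.change_involution {τ : TensorSquare H K}
    {S₁ S₁s S₂ S₂s : H →SL[starRingEnd ℂ] H}
    (hinv₂ : ∀ x : H, S₂ (S₂ x) = x)
    (hadj₁ : ∀ x y : H, ⟪S₁s y, x⟫_ℂ = ⟪S₁ x, y⟫_ℂ)
    (hadj₂ : ∀ x y : H, ⟪S₂s y, x⟫_ℂ = ⟪S₂ x, y⟫_ℂ)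
    {L R T Tc₂ : K →L[ℂ] K}
    (hL : ∀ v w : H, L (τ.tmul v w) = τ.tmul (S₁s (S₂s v)) w)
    (hR : ∀ v w : H, R (τ.tmul v w) = τ.tmul v (S₂s (S₁s w)))
    (hTc₂ : CrossRelB τ S₂ S₂s T Tc₂) :
    CrossRelB τ S₁ S₁s T (L.comp (Tc₂.comp R)) := by
  have hS₂s : Function.Involutive S₂s := Function.Involutive.antilinearAdjoint hinv₂ hadj₂
  intro φ₁ φ₂ ψ₁ ψ₂
  rw [ContinuousLinearMap.comp_apply, ContinuousLinearMap.comp_apply, hR,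
    τ.inner_tmul_apply_of_map_left L hL (inner_antilinearAdjoint_comp hadj₁ hadj₂),
    hTc₂, hS₂s, hinv₂]

end Crossing

theorem crossable_independent_of_bounded_involution_general
    [NormedAddCommGroup H] [InnerProductSpace ℂ H]
    [NormedAddCommGroup K] [InnerProductSpace ℂ K]
    (τ : TensorSquare H K)
    (S₁ S₁s S₂ S₂s : H →SL[starRingEnd ℂ] H)
    (hinv₁ : ∀ x : H, S₁ (S₁ x) = x) (hinv₂ : ∀ x : H, S₂ (S₂ x) = x)
    (hadj₁ : ∀ x y : H, ⟪S₁s y, x⟫_ℂ = ⟪S₁ x, y⟫_ℂ)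
    (hadj₂ : ∀ x y : H, ⟪S₂s y, x⟫_ℂ = ⟪S₂ x, y⟫_ℂ)
    (L R L' R' : K →L[ℂ] K)
    (hL : ∀ v w : H, L (τ.tmul v w) = τ.tmul (S₁s (S₂s v)) w)
    (hR : ∀ v w : H, R (τ.tmul v w) = τ.tmul v (S₂s (S₁s w)))
    (hL' : ∀ v w : H, L' (τ.tmul v w) = τ.tmul (S₂s (S₁s v)) w)
    (hR' : ∀ v w : H, R' (τ.tmul v w) = τ.tmul v (S₁s (S₂s w)))
    (T : K →L[ℂ] K) :
    ((∃ Tc, CrossRelB τ S₁ S₁s T Tc) ↔ (∃ Tc, CrossRelB τ S₂ S₂s T Tc)) ∧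
    (∀ Tc₂ : K →L[ℂ] K, CrossRelB τ S₂ S₂s T Tc₂ →
      CrossRelB τ S₁ S₁s T (L.comp (Tc₂.comp R))) := by
  have cross₁_of_cross₂ (Tc₂ : K →L[ℂ] K) (h : CrossRelB τ S₂ S₂s T Tc₂) :
      CrossRelB τ S₁ S₁s T (L.comp (Tc₂.comp R)) :=
    h.change_involution hinv₂ hadj₁ hadj₂ hL hR
  refine ⟨⟨fun ⟨Tc₁, h⟩ => ⟨_, h.change_involution hinv₁ hadj₂ hadj₁ hL' hR'⟩,
    fun ⟨Tc₂, h⟩ => ⟨_, cross₁_of_cross₂ Tc₂ h⟩⟩, cross₁_of_cross₂⟩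

/-- For two bounded antilinear involutions `S₁, S₂` on `H`, an operator
`T` is `S₁`-crossable iff it is `S₂`-crossable, and in that case
`Cross_{S₁}(T) = (S₁* S₂* ⊗ 1) Cross_{S₂}(T) (1 ⊗ S₂* S₁*)`.
The operators `L = S₁*S₂* ⊗ 1`, `R = 1 ⊗ S₂*S₁*` (and `L', R'` with the roles of `S₁, S₂`
exchanged) are realized on the tensor square by their actions on simple tensors. -/
theorem crossable_independent_of_bounded_involution
    [NormedAddCommGroup H] [InnerProductSpace ℂ H] [CompleteSpace H]
    [NormedAddCommGroup K] [InnerProductSpace ℂ K] [CompleteSpace K]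
    (τ : TensorSquare H K)
    (S₁ S₁s S₂ S₂s : H →SL[starRingEnd ℂ] H)
    (hinv₁ : ∀ x : H, S₁ (S₁ x) = x) (hinv₂ : ∀ x : H, S₂ (S₂ x) = x)
    (hadj₁ : ∀ x y : H, ⟪S₁s y, x⟫_ℂ = ⟪S₁ x, y⟫_ℂ)
    (hadj₂ : ∀ x y : H, ⟪S₂s y, x⟫_ℂ = ⟪S₂ x, y⟫_ℂ)
    (L R L' R' : K →L[ℂ] K)
    (hL : ∀ v w : H, L (τ.tmul v w) = τ.tmul (S₁s (S₂s v)) w)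
    (hR : ∀ v w : H, R (τ.tmul v w) = τ.tmul v (S₂s (S₁s w)))
    (hL' : ∀ v w : H, L' (τ.tmul v w) = τ.tmul (S₂s (S₁s v)) w)
    (hR' : ∀ v w : H, R' (τ.tmul v w) = τ.tmul v (S₁s (S₂s w)))
    (T : K →L[ℂ] K) :
    ((∃ Tc, CrossRelB τ S₁ S₁s T Tc) ↔ (∃ Tc, CrossRelB τ S₂ S₂s T Tc)) ∧
    (∀ Tc₂ : K →L[ℂ] K, CrossRelB τ S₂ S₂s T Tc₂ →
      CrossRelB τ S₁ S₁s T (L.comp (Tc₂.comp R))) :=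
  crossable_independent_of_bounded_involution_general τ S₁ S₁s S₂ S₂s hinv₁ hinv₂ hadj₁ hadj₂ L R L'
    R' hL hR hL' hR' T
end
end

section
/- Let S be a bounded antilinear involution on H. For S-crossable T, the inverse of the crossing map satisfies Cross_S^{-1}(T) = Cross_S(T*)*, and Cross_S^{-1}(T) is uniquely determined by ⟨φ₁⊗ψ₁, Cross_S^{-1}(T)(φ₂⊗ψ₂)⟩ = ⟨Sφ₂⊗φ₁, T(ψ₂⊗S*ψ₁)⟩ for all vectors. -/
noncomputable section
open scoped InnerProductSpace ComplexConjugate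

variable {H K : Type*}

/-!
Substituting `φ₁ ↦ S φ₂` and `ψ₂ ↦ S* ψ₁` in the crossing relation `Cross_S(X) = T` and using
`S² = 1 = (S*)²` gives the inverse crossing relation. Conjugating that relation turns it into
the crossing relation `Cross_S(T*) = X*`, and since simple tensors span a dense subspace, the
inverse crossing relation determines `X`.
-/

section Bounded
variable [NormedAddCommGroup H] [InnerProductSpace ℂ H]
  [NormedAddCommGroup K] [InnerProductSpace ℂ K]

/-- The inverse crossing relation `X = Cross_S⁻¹(T)`. -/
def InvCrossRelB (τ : TensorSquare H K) (S Sstar : H →SL[starRingEnd ℂ] H) (T X : K →L[ℂ] K) :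
    Prop :=
  ∀ φ₁ ψ₁ φ₂ ψ₂ : H,
    ⟪τ.tmul φ₁ ψ₁, X (τ.tmul φ₂ ψ₂)⟫_ℂ = ⟪τ.tmul (S φ₂) φ₁, T (τ.tmul ψ₂ (Sstar ψ₁))⟫_ℂ

theorem TensorSquare.ext_inner_tmul_left (τ : TensorSquare H K) {u v : K}
    (h : ∀ a b : H, ⟪τ.tmul a b, u⟫_ℂ = ⟪τ.tmul a b, v⟫_ℂ) : u = v := by
  refine τ.dense_span.eq_of_inner_right (𝕜 := ℂ) fun w hw => ?_
  induction hw using Submodule.span_induction with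
  | mem _ hx => obtain ⟨p, rfl⟩ := hx; exact h p.1 p.2
  | zero => simp
  | add x y _ _ hx hy => rw [inner_add_left, inner_add_left, hx, hy]
  | smul c x _ hx => rw [inner_smul_left, inner_smul_left, hx]

theorem TensorSquare.clm_ext_inner_tmul (τ : TensorSquare H K) {A B : K →L[ℂ] K}
    (h : ∀ a b c d : H,
      ⟪τ.tmul a b, A (τ.tmul c d)⟫_ℂ = ⟪τ.tmul a b, B (τ.tmul c d)⟫_ℂ) : A = B := by
  refine ContinuousLinearMap.ext_on τ.dense_span ?_
  rintro _ ⟨p, rfl⟩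
  exact τ.ext_inner_tmul_left fun a b => h a b p.1 p.2

theorem involutive_of_inner_adjoint {S Sstar : H → H} (hinv : ∀ x, S (S x) = x)
    (hadj : ∀ x y, ⟪Sstar y, x⟫_ℂ = ⟪S x, y⟫_ℂ) : Function.Involutive Sstar :=
  fun x => ext_inner_right ℂ fun v => by
    rw [hadj, ← inner_conj_symm, hadj, hinv, inner_conj_symm]

theorem CrossRelB.invCrossRelB {τ : TensorSquare H K} {S Sstar : H →SL[starRingEnd ℂ] H}
    (hinv : ∀ x, S (S x) = x) (hadj : ∀ x y, ⟪Sstar y, x⟫_ℂ = ⟪S x, y⟫_ℂ) {X T : K →L[ℂ] K}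
    (hX : CrossRelB τ S Sstar X T) : InvCrossRelB τ S Sstar T X := by
  intro φ₁ ψ₁ φ₂ ψ₂
  have h := hX (S φ₂) φ₁ ψ₂ (Sstar ψ₁)
  rwa [hinv, involutive_of_inner_adjoint hinv hadj, eq_comm] at h

theorem InvCrossRelB.unique {τ : TensorSquare H K} {S Sstar : H →SL[starRingEnd ℂ] H}
    {T X X' : K →L[ℂ] K} (hX : InvCrossRelB τ S Sstar T X) (hX' : InvCrossRelB τ S Sstar T X') :
    X = X' :=
  τ.clm_ext_inner_tmul fun a b c d => by rw [hX, hX']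

theorem CrossRelB.adjoint [CompleteSpace K] {τ : TensorSquare H K}
    {S Sstar : H →SL[starRingEnd ℂ] H} (hinv : ∀ x, S (S x) = x)
    (hadj : ∀ x y, ⟪Sstar y, x⟫_ℂ = ⟪S x, y⟫_ℂ) {X T : K →L[ℂ] K}
    (hX : CrossRelB τ S Sstar X T) :
    CrossRelB τ S Sstar (ContinuousLinearMap.adjoint T) (ContinuousLinearMap.adjoint X) := by
  intro a b c d
  rw [ContinuousLinearMap.adjoint_inner_right, ContinuousLinearMap.adjoint_inner_right,
    ← inner_conj_symm, ← inner_conj_symm (T _), hX.invCrossRelB hinv hadj c d a b]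

end Bounded

theorem crossing_map_inverse_general
    [NormedAddCommGroup H] [InnerProductSpace ℂ H]
    [NormedAddCommGroup K] [InnerProductSpace ℂ K] [CompleteSpace K]
    (τ : TensorSquare H K)
    (S Sstar : H →SL[starRingEnd ℂ] H)
    (hinv : ∀ x : H, S (S x) = x)
    (hadj : ∀ x y : H, ⟪Sstar y, x⟫_ℂ = ⟪S x, y⟫_ℂ) :
    -- Cross_S⁻¹(T) = Cross_S(T*)*: if Cross_S(X) = T then X = Cross_S(T*)*
    (∀ X T : K →L[ℂ] K, CrossRelB τ S Sstar X T →
      ∃ C : K →L[ℂ] K, CrossRelB τ S Sstar (ContinuousLinearMap.adjoint T) C ∧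
        X = ContinuousLinearMap.adjoint C) ∧
    -- the inverse crossing relation holds for X = Cross_S⁻¹(T)
    (∀ X T : K →L[ℂ] K, CrossRelB τ S Sstar X T →
      ∀ φ₁ ψ₁ φ₂ ψ₂ : H,
        ⟪τ.tmul φ₁ ψ₁, X (τ.tmul φ₂ ψ₂)⟫_ℂ = ⟪τ.tmul (S φ₂) φ₁, T (τ.tmul ψ₂ (Sstar ψ₁))⟫_ℂ) ∧
    -- and it is uniquely fixed by it
    (∀ X X' T : K →L[ℂ] K,
      (∀ φ₁ ψ₁ φ₂ ψ₂ : H,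
        ⟪τ.tmul φ₁ ψ₁, X (τ.tmul φ₂ ψ₂)⟫_ℂ = ⟪τ.tmul (S φ₂) φ₁, T (τ.tmul ψ₂ (Sstar ψ₁))⟫_ℂ) →
      (∀ φ₁ ψ₁ φ₂ ψ₂ : H,
        ⟪τ.tmul φ₁ ψ₁, X' (τ.tmul φ₂ ψ₂)⟫_ℂ = ⟪τ.tmul (S φ₂) φ₁, T (τ.tmul ψ₂ (Sstar ψ₁))⟫_ℂ) →
      X = X') := by
  refine ⟨fun X T hX => ?_, fun X T hX => hX.invCrossRelB hinv hadj,
    fun X X' T hX hX' => InvCrossRelB.unique hX hX'⟩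
  exact ⟨ContinuousLinearMap.adjoint X, hX.adjoint hinv hadj,
    (ContinuousLinearMap.adjoint_adjoint X).symm⟩

/-- For a bounded antilinear involution `S`, the inverse of the crossing
map satisfies `Cross_S⁻¹(T) = Cross_S(T*)*`, and `Cross_S⁻¹(T)` is uniquely determined by
the inverse crossing relation
`⟨φ₁⊗ψ₁, Cross_S⁻¹(T)(φ₂⊗ψ₂)⟩ = ⟨Sφ₂⊗φ₁, T(ψ₂⊗S*ψ₁)⟩`. -/
theorem crossing_map_inverse
    [NormedAddCommGroup H] [InnerProductSpace ℂ H] [CompleteSpace H]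
    [NormedAddCommGroup K] [InnerProductSpace ℂ K] [CompleteSpace K]
    (τ : TensorSquare H K)
    (S Sstar : H →SL[starRingEnd ℂ] H)
    (hinv : ∀ x : H, S (S x) = x)
    (hadj : ∀ x y : H, ⟪Sstar y, x⟫_ℂ = ⟪S x, y⟫_ℂ) :
    -- Cross_S⁻¹(T) = Cross_S(T*)*: if Cross_S(X) = T then X = Cross_S(T*)*
    (∀ X T : K →L[ℂ] K, CrossRelB τ S Sstar X T →
      ∃ C : K →L[ℂ] K, CrossRelB τ S Sstar (ContinuousLinearMap.adjoint T) C ∧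
        X = ContinuousLinearMap.adjoint C) ∧
    -- the inverse crossing relation holds for X = Cross_S⁻¹(T)
    (∀ X T : K →L[ℂ] K, CrossRelB τ S Sstar X T →
      ∀ φ₁ ψ₁ φ₂ ψ₂ : H,
        ⟪τ.tmul φ₁ ψ₁, X (τ.tmul φ₂ ψ₂)⟫_ℂ = ⟪τ.tmul (S φ₂) φ₁, T (τ.tmul ψ₂ (Sstar ψ₁))⟫_ℂ) ∧
    -- and it is uniquely fixed by it
    (∀ X X' T : K →L[ℂ] K,
      (∀ φ₁ ψ₁ φ₂ ψ₂ : H,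
        ⟪τ.tmul φ₁ ψ₁, X (τ.tmul φ₂ ψ₂)⟫_ℂ = ⟪τ.tmul (S φ₂) φ₁, T (τ.tmul ψ₂ (Sstar ψ₁))⟫_ℂ) →
      (∀ φ₁ ψ₁ φ₂ ψ₂ : H,
        ⟪τ.tmul φ₁ ψ₁, X' (τ.tmul φ₂ ψ₂)⟫_ℂ = ⟪τ.tmul (S φ₂) φ₁, T (τ.tmul ψ₂ (Sstar ψ₁))⟫_ℂ) →
      X = X') :=
  crossing_map_inverse_general τ S Sstar hinv hadj
end
end

section
/- Let H be a standard subspace of 𝓗, R ∈ B(𝓗) self-adjoint, and V ∈ B(𝓗) with V H ⊂ H. Then (R⊗V)F is the unique S_H-crossing symmetric operator T such that a_L(ψ) T a_R*(ψ) = ⟨ψ, Rψ⟩ V for all ψ ∈ 𝓗, where F is the tensor flip. -/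
/-!
Crossing symmetry of `(R ⊗ V)F` is checked on simple tensors, where it reduces to
`⟪R φ₂, ψ₁⟫ = ⟪φ₂, R ψ₁⟫` and `⟪S* ψ₂, V S φ₁⟫ = ⟪S V S φ₁, ψ₂⟫ = ⟪V φ₁, ψ₂⟫`: an operator with
`V H ⊂ H` commutes with the Tomita operator `S = S_H` on `dom S = H + iH`.

For uniqueness, `(ψ, χ) ↦ ⟪ψ ⊗ η, T (ξ ⊗ χ)⟫` is sesquilinear, so by complex polarization it is
determined by its values at `ψ = χ`, which the condition `a_L(ψ) T a_R*(ψ) = ⟪ψ, R ψ⟫ V` fixes;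
simple tensors span a dense subspace of `𝓗 ⊗ 𝓗`.
-/

noncomputable section
open scoped InnerProductSpace ComplexConjugate

variable {H K : Type*}

namespace LinearMap

theorem eq_zero_of_forall_apply_self_eq_zero {M N : Type*} [AddCommGroup M] [Module ℂ M]
    [AddCommGroup N] [Module ℂ N] (B : M →ₗ⋆[ℂ] M →ₗ[ℂ] N) (hB : ∀ x, B x x = 0) : B = 0 := by
  ext x y
  have hsum := hB (x + y)
  have hdiff := hB (x + Complex.I • y)
  simp only [map_add, map_smulₛₗ, add_apply, smul_apply, hB, Complex.conj_I, RingHom.id_apply,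
    smul_zero, zero_add, add_zero] at hsum hdiff
  rw [zero_apply, zero_apply]
  linear_combination (norm := match_scalars) (1 / 2 : ℂ) • hsum - (Complex.I / 2) • hdiff <;>
    ring_nf <;> norm_num [Complex.I_sq]

end LinearMap

namespace TensorSquare

variable [NormedAddCommGroup H] [InnerProductSpace ℂ H] [NormedAddCommGroup K]
  [InnerProductSpace ℂ K] (τ : TensorSquare H K)

def tmulₗ : H →ₗ[ℂ] H →ₗ[ℂ] K :=
  LinearMap.mk₂ ℂ τ.tmul τ.tmul_add_left τ.tmul_smul_left τ.tmul_add_right τ.tmul_smul_right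

@[simp]
theorem tmulₗ_apply (u v : H) : τ.tmulₗ u v = τ.tmul u v := rfl

theorem continuousLinearMap_ext {F : Type*} [AddCommMonoid F] [Module ℂ F] [TopologicalSpace F]
    [T2Space F] {f g : K →L[ℂ] F} (h : ∀ u v, f (τ.tmul u v) = g (τ.tmul u v)) : f = g :=
  ContinuousLinearMap.ext_on τ.dense_span (by rintro _ ⟨p, rfl⟩; exact h p.1 p.2)

theorem ext_inner {x y : K} (h : ∀ u v, ⟪τ.tmul u v, x⟫_ℂ = ⟪τ.tmul u v, y⟫_ℂ) : x = y := by
  have hxy : innerSL ℂ x = innerSL ℂ y :=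
    τ.continuousLinearMap_ext fun u v => by
      rw [innerSL_apply_apply, ← inner_conj_symm, h, inner_conj_symm, innerSL_apply_apply]
  exact ext_inner_right ℂ fun v => by simpa using congr($hxy v)

theorem continuousLinearMap_ext_of_inner_diag {T T' : K →L[ℂ] K}
    (h : ∀ ψ η ξ, ⟪τ.tmul ψ η, T (τ.tmul ξ ψ)⟫_ℂ = ⟪τ.tmul ψ η, T' (τ.tmul ξ ψ)⟫_ℂ) :
    T = T' := by
  refine τ.continuousLinearMap_ext fun ξ χ => τ.ext_inner fun ψ η => ?_
  let B : H →ₗ⋆[ℂ] H →ₗ[ℂ] ℂ :=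
    (innerₛₗ ℂ ∘ₛₗ τ.tmulₗ.flip η).compl₂ ((T - T').toLinearMap ∘ₗ τ.tmulₗ ξ)
  have hB : B = 0 := LinearMap.eq_zero_of_forall_apply_self_eq_zero B fun a => by
    simp [B, inner_sub_right, h a η ξ]
  simpa [B, inner_sub_right, sub_eq_zero] using congr($hB ψ χ)

theorem inner_tmul_eq_inner_aL {aL : H → (K →L[ℂ] H)}
    (haL : ∀ ψ u v : H, aL ψ (τ.tmul u v) = ⟪ψ, u⟫_ℂ • v) (ψ η : H) (m : K) :
    ⟪τ.tmul ψ η, m⟫_ℂ = ⟪η, aL ψ m⟫_ℂ := by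
  have h : innerSL ℂ (τ.tmul ψ η) = (innerSL ℂ η).comp (aL ψ) :=
    τ.continuousLinearMap_ext fun u v => by simp [haL, τ.inner_tmul]
  simpa using congr($h m)

theorem continuousLinearMap_ext_of_aL_diag {aL : H → (K →L[ℂ] H)}
    (haL : ∀ ψ u v : H, aL ψ (τ.tmul u v) = ⟪ψ, u⟫_ℂ • v) {T T' : K →L[ℂ] K}
    (h : ∀ ψ ξ, aL ψ (T (τ.tmul ξ ψ)) = aL ψ (T' (τ.tmul ξ ψ))) : T = T' :=
  τ.continuousLinearMap_ext_of_inner_diag fun ψ η ξ => by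
    rw [τ.inner_tmul_eq_inner_aL haL, τ.inner_tmul_eq_inner_aL haL, h]

end TensorSquare

namespace AntiInvolution

variable [NormedAddCommGroup H] [InnerProductSpace ℂ H] {S : AntiInvolution H} {Hr : Submodule ℝ H}

theorem map_mem_dom_of_mapsTo
    (hSdom : ∀ x : H, x ∈ S.dom ↔ ∃ h₁ ∈ Hr, ∃ h₂ ∈ Hr, x = h₁ + Complex.I • h₂)
    {V : H →ₗ[ℂ] H} (hV : ∀ h ∈ Hr, V h ∈ Hr) {x : H} (hx : x ∈ S.dom) : V x ∈ S.dom := by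
  obtain ⟨h₁, hh₁, h₂, hh₂, rfl⟩ := (hSdom x).mp hx
  exact (hSdom _).mpr ⟨V h₁, hV h₁ hh₁, V h₂, hV h₂ hh₂, by simp⟩

theorem toFun_map_of_mapsTo
    (hSdom : ∀ x : H, x ∈ S.dom ↔ ∃ h₁ ∈ Hr, ∃ h₂ ∈ Hr, x = h₁ + Complex.I • h₂)
    (hSfun : ∀ h₁ ∈ Hr, ∀ h₂ ∈ Hr, S.toFun (h₁ + Complex.I • h₂) = h₁ - Complex.I • h₂)
    {V : H →ₗ[ℂ] H} (hV : ∀ h ∈ Hr, V h ∈ Hr) {x : H} (hx : x ∈ S.dom) :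
    S.toFun (V x) = V (S.toFun x) := by
  obtain ⟨h₁, hh₁, h₂, hh₂, rfl⟩ := (hSdom x).mp hx
  rw [hSfun h₁ hh₁ h₂ hh₂, _root_.map_add V, _root_.map_smul V,
    hSfun _ (hV h₁ hh₁) _ (hV h₂ hh₂), _root_.map_sub V, _root_.map_smul V]

end AntiInvolution

theorem crossRelU_adjoint_of_commute [NormedAddCommGroup H] [InnerProductSpace ℂ H]
    [CompleteSpace H] [NormedAddCommGroup K] [InnerProductSpace ℂ K] [CompleteSpace K]
    (τ : TensorSquare H K) (S : AntiInvolution H) {R V : H →L[ℂ] H} (hR : IsSelfAdjoint R)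
    (hVdom : ∀ x ∈ S.dom, V x ∈ S.dom) (hVS : ∀ x ∈ S.dom, S.toFun (V x) = V (S.toFun x))
    {T₀ : K →L[ℂ] K} (hT₀ : ∀ v w : H, T₀ (τ.tmul v w) = τ.tmul (R w) (V v)) :
    CrossRelU τ S T₀ (ContinuousLinearMap.adjoint T₀) := by
  intro φ₁ hφ₁ ψ₁ _ φ₂ _ ψ₂ hψ₂
  have hSφ₁ := S.invol_mem φ₁ hφ₁
  have hV_crossed : ⟪S.adjFun ψ₂, V (S.toFun φ₁)⟫_ℂ = ⟪V φ₁, ψ₂⟫_ℂ := by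
    rw [S.adj_spec ψ₂ hψ₂ _ (hVdom _ hSφ₁), hVS _ hSφ₁, S.invol φ₁ hφ₁]
  rw [ContinuousLinearMap.adjoint_inner_right, hT₀, hT₀, τ.inner_tmul, τ.inner_tmul,
    ← R.adjoint_inner_right φ₂ ψ₁, hR.adjoint_eq, hV_crossed]

theorem prod_endo_flip_unique_crossing_symmetric_general
    [NormedAddCommGroup H] [InnerProductSpace ℂ H] [CompleteSpace H]
    [NormedAddCommGroup K] [InnerProductSpace ℂ K] [CompleteSpace K]
    (τ : TensorSquare H K)
    (Hr : Submodule ℝ H)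
    (S : AntiInvolution H)
    (hSdom : ∀ x : H, x ∈ S.dom ↔ ∃ h₁ ∈ Hr, ∃ h₂ ∈ Hr, x = h₁ + Complex.I • h₂)
    (hSfun : ∀ h₁ ∈ Hr, ∀ h₂ ∈ Hr, S.toFun (h₁ + Complex.I • h₂) = h₁ - Complex.I • h₂)
    (aL : H → (K →L[ℂ] H)) (haL : ∀ ψ u v : H, aL ψ (τ.tmul u v) = ⟪ψ, u⟫_ℂ • v)
    (R V : H →L[ℂ] H) (hR : IsSelfAdjoint R) (hV : ∀ h ∈ Hr, V h ∈ Hr)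
    (T₀ : K →L[ℂ] K) (hT₀ : ∀ v w : H, T₀ (τ.tmul v w) = τ.tmul (R w) (V v)) :
    -- T₀ is S-crossing symmetric
    CrossRelU τ S T₀ (ContinuousLinearMap.adjoint T₀) ∧
    -- with V_ψ(T₀) = ⟨ψ, Rψ⟩ V
    (∀ ψ ξ : H, aL ψ (T₀ (τ.tmul ξ ψ)) = ⟪ψ, R ψ⟫_ℂ • V ξ) ∧
    -- and it is the unique such crossing symmetric operator
    (∀ T : K →L[ℂ] K, CrossRelU τ S T (ContinuousLinearMap.adjoint T) →
      (∀ ψ ξ : H, aL ψ (T (τ.tmul ξ ψ)) = ⟪ψ, R ψ⟫_ℂ • V ξ) → T = T₀) := by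
  have hdiag : ∀ ψ ξ : H, aL ψ (T₀ (τ.tmul ξ ψ)) = ⟪ψ, R ψ⟫_ℂ • V ξ := fun ψ ξ => by
    rw [hT₀, haL]
  refine ⟨crossRelU_adjoint_of_commute τ S hR
    (fun x hx => AntiInvolution.map_mem_dom_of_mapsTo hSdom (V := V.toLinearMap) hV hx)
    (fun x hx => AntiInvolution.toFun_map_of_mapsTo hSdom hSfun (V := V.toLinearMap) hV hx)
    hT₀, hdiag, fun T _ hT => ?_⟩
  exact τ.continuousLinearMap_ext_of_aL_diag haL fun ψ ξ => by rw [hT, hdiag]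

/-- Let `Hr` be a standard subspace of `𝓗` with Tomita operator `S`,
`R` self-adjoint, and `V` an endomorphism of `Hr`. Then `(R ⊗ V)F` (realized by `T₀`, acting
on simple tensors by `v ⊗ w ↦ (R w) ⊗ (V v)`) is the unique `S`-crossing symmetric operator
`T` with `a_L(ψ) T a_R*(ψ) = ⟨ψ, Rψ⟩ V` for all `ψ`. -/
theorem prod_endo_flip_unique_crossing_symmetric
    [NormedAddCommGroup H] [InnerProductSpace ℂ H] [CompleteSpace H]
    [NormedAddCommGroup K] [InnerProductSpace ℂ K] [CompleteSpace K]
    (τ : TensorSquare H K)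
    (Hr : Submodule ℝ H) (hclosed : IsClosed (Hr : Set H))
    (hsep : ∀ x ∈ Hr, ∀ y ∈ Hr, x = Complex.I • y → x = 0)
    (hdense : Dense {x : H | ∃ h₁ ∈ Hr, ∃ h₂ ∈ Hr, x = h₁ + Complex.I • h₂})
    (S : AntiInvolution H)
    (hSdom : ∀ x : H, x ∈ S.dom ↔ ∃ h₁ ∈ Hr, ∃ h₂ ∈ Hr, x = h₁ + Complex.I • h₂)
    (hSfun : ∀ h₁ ∈ Hr, ∀ h₂ ∈ Hr, S.toFun (h₁ + Complex.I • h₂) = h₁ - Complex.I • h₂)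
    (aL : H → (K →L[ℂ] H)) (haL : ∀ ψ u v : H, aL ψ (τ.tmul u v) = ⟪ψ, u⟫_ℂ • v)
    (R V : H →L[ℂ] H) (hR : IsSelfAdjoint R) (hV : ∀ h ∈ Hr, V h ∈ Hr)
    (T₀ : K →L[ℂ] K) (hT₀ : ∀ v w : H, T₀ (τ.tmul v w) = τ.tmul (R w) (V v)) :
    -- T₀ is S-crossing symmetric
    CrossRelU τ S T₀ (ContinuousLinearMap.adjoint T₀) ∧
    -- with V_ψ(T₀) = ⟨ψ, Rψ⟩ V
    (∀ ψ ξ : H, aL ψ (T₀ (τ.tmul ξ ψ)) = ⟪ψ, R ψ⟫_ℂ • V ξ) ∧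
    -- and it is the unique such crossing symmetric operator
    (∀ T : K →L[ℂ] K, CrossRelU τ S T (ContinuousLinearMap.adjoint T) →
      (∀ ψ ξ : H, aL ψ (T (τ.tmul ξ ψ)) = ⟪ψ, R ψ⟫_ℂ • V ξ) → T = T₀) :=
  prod_endo_flip_unique_crossing_symmetric_general τ Hr S hSdom hSfun aL haL R V hR hV T₀ hT₀
end
end
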